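/- Under the standing hypotheses, R is an α-partial Galois extension of R^α if and only if the map ρ : R⊗_{R^α}R → ∏_{g∈G} D_g given by ρ(x⊗y) = (x·α_g(y·1_{g⁻¹}))_{g∈G} is an isomorphism of left R-modules. -/

import Mathlib

universe u

/-- A groupoid in the algebraic sense of Lawson: a non-empty set `G` with a
partially defined binary operation (here modeled by a total operation `mul`
whose value is only constrained when it is defined, i.e. when `d g = r h`),
an inversion `inv`, and domain/range maps `d`, `r`. -/
structure AlgGroupoid (G : Type u) where
  mul : G → G → G
  inv : G → G
  d : G → G
  r : G → G
  mul_assoc' : ∀ g h l, d g = r h → d h = r l → mul (mul g h) l = mul g (mul h l)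
  mul_d : ∀ g, mul g (d g) = g
  r_mul : ∀ g, mul (r g) g = g
  inv_mul : ∀ g, mul (inv g) g = d g
  mul_inv : ∀ g, mul g (inv g) = r g
  d_mul : ∀ g h, d g = r h → d (mul g h) = d h
  r_mul' : ∀ g h, d g = r h → r (mul g h) = r g
  d_inv : ∀ g, d (inv g) = r g
  r_inv : ∀ g, r (inv g) = d g
  inv_inv : ∀ g, inv (inv g) = g
  d_d : ∀ g, d (d g) = d g
  r_d : ∀ g, r (d g) = d g
  d_r : ∀ g, d (r g) = r g
  r_r : ∀ g, r (r g) = r g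

/-- `e` is an identity element of the groupoid `𝔾`, i.e. an element of `G₀`. -/
def AlgGroupoid.isId {G : Type u} (𝔾 : AlgGroupoid G) (e : G) : Prop := 𝔾.d e = e

instance {G : Type u} [DecidableEq G] (𝔾 : AlgGroupoid G) (e : G) : Decidable (𝔾.isId e) :=
  inferInstanceAs (Decidable (𝔾.d e = e))

/-- `D` is a two-sided ideal of `E` (both being subsets of an ambient
non-unital ring `T`). -/
structure IsIdealIn {T : Type u} [NonUnitalRing T] (D E : Set T) : Prop where
  subset : D ⊆ E
  zero_mem : (0 : T) ∈ D
  add_mem : ∀ ⦃x y : T⦄, x ∈ D → y ∈ D → x + y ∈ D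
  neg_mem : ∀ ⦃x : T⦄, x ∈ D → -x ∈ D
  mul_mem_left : ∀ ⦃x y : T⦄, x ∈ E → y ∈ D → x * y ∈ D
  mul_mem_right : ∀ ⦃x y : T⦄, x ∈ D → y ∈ E → x * y ∈ D

/-- `u` is a (two-sided) multiplicative identity element of the subset `D`. -/
def IsIdentityElem {T : Type u} [NonUnitalRing T] (u : T) (D : Set T) : Prop :=
  u ∈ D ∧ ∀ x ∈ D, u * x = x ∧ x * u = x

/-- A partial action `α = ({D_g}, {α_g})` of a groupoid `𝔾` on the ring whose
carrier is the subset `R` of the ambient non-unital ring `T` (take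
`R = Set.univ` for a partial action on `T` itself).  For each `g`, `D (r g)`
is an ideal of `R`, `D g` is an ideal of `D (r g)` and `act g` restricts to a
ring isomorphism from `D (inv g)` onto `D g`; moreover `act e` is the identity
of `D e` for identities `e`, and for composable `g, h` the map `act (mul g h)`
extends `act g ∘ act h` (whose domain is `(act h)⁻¹ (D (inv g) ∩ D h)`). -/
structure PartialGroupoidAction {G : Type u} (𝔾 : AlgGroupoid G) (T : Type u)
    [NonUnitalRing T] (R : Set T) where
  D : G → Set T
  act : G → T → T
  ideal_r : ∀ g, IsIdealIn (D (𝔾.r g)) R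
  ideal : ∀ g, IsIdealIn (D g) (D (𝔾.r g))
  bijOn : ∀ g, Set.BijOn (act g) (D (𝔾.inv g)) (D g)
  map_add : ∀ g, ∀ x ∈ D (𝔾.inv g), ∀ y ∈ D (𝔾.inv g), act g (x + y) = act g x + act g y
  map_mul : ∀ g, ∀ x ∈ D (𝔾.inv g), ∀ y ∈ D (𝔾.inv g), act g (x * y) = act g x * act g y
  act_id : ∀ e, 𝔾.isId e → ∀ x ∈ D e, act e x = x
  dom_cond : ∀ g h, 𝔾.d g = 𝔾.r h → ∀ x ∈ D (𝔾.inv h), act h x ∈ D (𝔾.inv g) →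
    x ∈ D (𝔾.inv (𝔾.mul g h))
  comp_cond : ∀ g h, 𝔾.d g = 𝔾.r h → ∀ x ∈ D (𝔾.inv h), act h x ∈ D (𝔾.inv g) →
    act g (act h x) = act (𝔾.mul g h) x

/-- The partial action `α` is global if, for all composable `g, h`, the
composite `α_g ∘ α_h` (taken on its largest possible domain) coincides with
`α_{gh}`; since both maps always agree on the domain of the composite, this
amounts to the equality of the two domains. -/
def PartialGroupoidAction.IsGlobal {G : Type u} {𝔾 : AlgGroupoid G} {T : Type u}
    [NonUnitalRing T] {R : Set T} (α : PartialGroupoidAction 𝔾 T R) : Prop :=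
  ∀ g h, 𝔾.d g = 𝔾.r h →
    {x | x ∈ α.D (𝔾.inv h) ∧ α.act h x ∈ α.D (𝔾.inv g)} = α.D (𝔾.inv (𝔾.mul g h))

/-- The subring `R^α` of invariants of `R` under the partial action `α`,
where `one g` denotes the identity element `1_g` of the ideal `D_g`. -/
def invariants {G : Type u} (𝔾 : AlgGroupoid G) {R : Type u} [Ring R]
    (α : PartialGroupoidAction 𝔾 R (Set.univ : Set R)) (one : G → R) : Set R :=
  {x : R | ∀ g : G, α.act g (x * one (𝔾.inv g)) = x * one g}

/-- The trace map `t_α : R → R`, `t_α(x) = ∑_{g ∈ G} α_g(x 1_{g⁻¹})`. -/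
def traceMap {G : Type u} [Fintype G] (𝔾 : AlgGroupoid G) {R : Type u} [Ring R]
    (α : PartialGroupoidAction 𝔾 R (Set.univ : Set R)) (one : G → R) (x : R) : R :=
  ∑ g : G, α.act g (x * one (𝔾.inv g))

/-- `R` is an `α`-partial Galois extension of `R^α`: there is a partial Galois
coordinate system `x_i, y_i ∈ R` with
`∑_i x_i α_g(y_i 1_{g⁻¹}) = δ_{e,g} 1_e` for all `e ∈ G₀`, `g ∈ G`. -/
def IsPartialGalois {G : Type u} [Fintype G] [DecidableEq G] (𝔾 : AlgGroupoid G)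
    {R : Type u} [Ring R] (α : PartialGroupoidAction 𝔾 R (Set.univ : Set R))
    (one : G → R) : Prop :=
  ∃ (n : ℕ) (xs ys : Fin n → R), ∀ g : G,
    ∑ i, xs i * α.act g (ys i * one (𝔾.inv g)) = if 𝔾.isId g then one g else 0

/-!
The key identity of the partial action is
`α_h(α_g(a 1_{g⁻¹}) 1_{h⁻¹}) = α_{hg}(a 1_{(hg)⁻¹}) 1_h` for composable `h, g`.
Summing it over `g` shows that traces `t_α(a)` are invariant; applied to Galois coordinates
`(x_i, y_i)` it gives `∑_i α_h(x_i 1_{h⁻¹}) α_g(y_i 1_{g⁻¹}) = δ_{g,h} 1_g`.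
Hence `∑_{h,i} f_h α_h(x_i 1_{h⁻¹}) ⊗ y_i` is a preimage of `f ∈ ∏_g D_g`, and if
`ρ(∑_j u_j ⊗ v_j) = 0` then the invariants `t_α(v_j x_i)` witness the vanishing of the tensor:
`v_j = ∑_i t_α(v_j x_i) y_i` and `∑_j u_j t_α(v_j x_i) = ∑_g ρ_g(∑_j u_j ⊗ v_j) α_g(x_i 1_{g⁻¹}) = 0`.
Conversely, surjectivity of `ρ` yields a preimage of `(δ_{e,g} 1_e)_g`, i.e. Galois coordinates.
-/

namespace AlgGroupoid

variable {G : Type u} (𝔾 : AlgGroupoid G)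

lemma isId_d (g : G) : 𝔾.isId (𝔾.d g) := 𝔾.d_d g

lemma isId_r (g : G) : 𝔾.isId (𝔾.r g) := 𝔾.d_r g

lemma r_eq_self_iff {e : G} : 𝔾.r e = e ↔ 𝔾.isId e :=
  ⟨fun h => by rw [AlgGroupoid.isId, ← h, 𝔾.d_r], fun h => by rw [← h, 𝔾.r_d]⟩

lemma inv_eq_self {e : G} (he : 𝔾.isId e) : 𝔾.inv e = e := by
  calc 𝔾.inv e = 𝔾.mul (𝔾.inv e) (𝔾.d (𝔾.inv e)) := (𝔾.mul_d _).symm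
    _ = 𝔾.mul (𝔾.inv e) e := by rw [𝔾.d_inv, (𝔾.r_eq_self_iff).2 he]
    _ = e := by rw [𝔾.inv_mul, he]

lemma eq_inv_of_mul_eq_d {g k : G} (hc : 𝔾.d k = 𝔾.r g) (hkg : 𝔾.mul k g = 𝔾.d g) :
    k = 𝔾.inv g := by
  calc k = 𝔾.mul k (𝔾.mul g (𝔾.inv g)) := by rw [𝔾.mul_inv, ← hc, 𝔾.mul_d]
    _ = 𝔾.mul (𝔾.mul k g) (𝔾.inv g) := (𝔾.mul_assoc' k g _ hc (𝔾.r_inv g).symm).symm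
    _ = 𝔾.inv g := by rw [hkg, ← 𝔾.r_inv, 𝔾.r_mul]

lemma inv_mul_cancel_left {h g : G} (hc : 𝔾.d h = 𝔾.r g) :
    𝔾.mul (𝔾.inv h) (𝔾.mul h g) = g := by
  rw [← 𝔾.mul_assoc' _ h g (𝔾.d_inv h) hc, 𝔾.inv_mul, hc, 𝔾.r_mul]

lemma mul_inv_cancel_left {h g : G} (hr : 𝔾.r h = 𝔾.r g) :
    𝔾.mul h (𝔾.mul (𝔾.inv h) g) = g := by
  rw [← 𝔾.mul_assoc' h _ g (𝔾.r_inv h).symm (by rw [𝔾.d_inv, hr]), 𝔾.mul_inv, hr, 𝔾.r_mul]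

lemma mul_inv_rev {h g : G} (hc : 𝔾.d h = 𝔾.r g) :
    𝔾.inv (𝔾.mul h g) = 𝔾.mul (𝔾.inv g) (𝔾.inv h) := by
  have hc' : 𝔾.d (𝔾.inv g) = 𝔾.r (𝔾.inv h) := by rw [𝔾.d_inv, 𝔾.r_inv, hc]
  refine (𝔾.eq_inv_of_mul_eq_d ?_ ?_).symm
  · rw [𝔾.d_mul _ _ hc', 𝔾.r_mul' h g hc, 𝔾.d_inv]
  · rw [𝔾.mul_assoc' _ _ _ hc' (by rw [𝔾.d_inv, 𝔾.r_mul' h g hc]),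
      𝔾.inv_mul_cancel_left hc, 𝔾.inv_mul, 𝔾.d_mul h g hc]

lemma not_isId_inv_mul {h g : G} (hr : 𝔾.r h = 𝔾.r g) (hne : g ≠ h) :
    ¬ 𝔾.isId (𝔾.mul (𝔾.inv h) g) := by
  intro hk
  have hd : 𝔾.mul (𝔾.inv h) g = 𝔾.d h := by
    rw [← (𝔾.r_eq_self_iff).2 hk, 𝔾.r_mul' _ _ (by rw [𝔾.d_inv, hr]), 𝔾.r_inv]
  apply hne
  rw [← 𝔾.mul_inv_cancel_left hr, hd, 𝔾.mul_d]

lemma sum_comp_mul_left [Fintype G] [DecidableEq G] {M : Type*} [AddCommMonoid M]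
    (h : G) (F : G → M) :
    ∑ g ∈ Finset.univ.filter (fun g => 𝔾.r g = 𝔾.d h), F (𝔾.mul h g) =
      ∑ g ∈ Finset.univ.filter (fun g => 𝔾.r g = 𝔾.r h), F g := by
  refine Finset.sum_nbij' (𝔾.mul h) (𝔾.mul (𝔾.inv h)) ?_ ?_ ?_ ?_ (fun _ _ => rfl)
  all_goals intro g hg; simp only [Finset.mem_filter, Finset.mem_univ, true_and] at hg ⊢
  · rw [𝔾.r_mul' h g hg.symm]
  · rw [𝔾.r_mul' _ g (by rw [𝔾.d_inv, hg]), 𝔾.r_inv]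
  · exact 𝔾.inv_mul_cancel_left hg.symm
  · exact 𝔾.mul_inv_cancel_left hg.symm

end AlgGroupoid

lemma IsIdentityElem.mul_comm {T : Type u} [NonUnitalRing T] {u : T} {I : Set T}
    (hu : IsIdentityElem u I) {x : T} (hux : u * x ∈ I) (hxu : x * u ∈ I) : u * x = x * u :=
  calc u * x = u * x * u := ((hu.2 _ hux).2).symm
    _ = x * u := by rw [mul_assoc, (hu.2 _ hxu).1]

lemma exists_fin_sum_mul_eq {ι : Type*} [Fintype ι] {R : Type*} [NonUnitalNonAssocSemiring R]
    (x y : ι → R) :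
    ∃ (k : ℕ) (x' y' : Fin k → R), ∀ F : R → R, ∑ j, x' j * F (y' j) = ∑ i, x i * F (y i) :=
  let e := (Fintype.equivFin ι).symm
  ⟨_, x ∘ e, y ∘ e, fun F => e.sum_comp fun i => x i * F (y i)⟩

namespace PartialGroupoidAction

variable {G : Type u} {𝔾 : AlgGroupoid G} {R : Type u} [Ring R]
  (α : PartialGroupoidAction 𝔾 R (Set.univ : Set R))

lemma mem_D_r {g : G} {x : R} (hx : x ∈ α.D g) : x ∈ α.D (𝔾.r g) := (α.ideal g).subset hx

lemma act_mem {g : G} {x : R} (hx : x ∈ α.D (𝔾.inv g)) : α.act g x ∈ α.D g :=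
  (α.bijOn g).mapsTo hx

lemma act_inv_mem {g : G} {x : R} (hx : x ∈ α.D g) : α.act (𝔾.inv g) x ∈ α.D (𝔾.inv g) :=
  α.act_mem (by rwa [𝔾.inv_inv])

lemma act_act_inv {g : G} {x : R} (hx : x ∈ α.D g) : α.act g (α.act (𝔾.inv g) x) = x := by
  have hx' : x ∈ α.D (𝔾.inv (𝔾.inv g)) := by rwa [𝔾.inv_inv]
  rw [α.comp_cond g _ (𝔾.r_inv g).symm x hx' (α.act_inv_mem hx), 𝔾.mul_inv,
    α.act_id _ (𝔾.isId_r g) x (α.mem_D_r hx)]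

lemma act_inv_act {g : G} {x : R} (hx : x ∈ α.D (𝔾.inv g)) :
    α.act (𝔾.inv g) (α.act g x) = x := by
  have hx' := α.act_act_inv (g := 𝔾.inv g) hx
  rwa [𝔾.inv_inv] at hx'

lemma act_zero (g : G) : α.act g 0 = 0 := by
  have h0 := (α.ideal (𝔾.inv g)).zero_mem
  simpa using α.map_add g 0 h0 0 h0

lemma sum_mem {g : G} {ι : Type*} {s : Finset ι} {f : ι → R} (hf : ∀ i ∈ s, f i ∈ α.D g) :
    ∑ i ∈ s, f i ∈ α.D g :=
  Finset.sum_induction f (· ∈ α.D g) (fun _ _ hx hy => (α.ideal g).add_mem hx hy) (α.ideal g).zero_mem hf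

lemma act_sum {g : G} {ι : Type*} {s : Finset ι} {f : ι → R}
    (hf : ∀ i ∈ s, f i ∈ α.D (𝔾.inv g)) :
    α.act g (∑ i ∈ s, f i) = ∑ i ∈ s, α.act g (f i) := by
  classical
  induction s using Finset.induction_on with
  | empty => simpa using α.act_zero g
  | insert a s ha ih =>
    rw [Finset.forall_mem_insert] at hf
    rw [Finset.sum_insert ha, Finset.sum_insert ha, α.map_add g _ hf.1 _ (α.sum_mem hf.2), ih hf.2]

lemma act_mem_mul {h g : G} (hc : 𝔾.d h = 𝔾.r g) {x : R} (hx : x ∈ α.D (𝔾.inv h))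
    (hxg : x ∈ α.D g) : α.act h x ∈ α.D (𝔾.mul h g) := by
  have hdom := α.dom_cond (𝔾.inv g) (𝔾.inv h) (by rw [𝔾.d_inv, 𝔾.r_inv, hc]) (α.act h x)
    (by rw [𝔾.inv_inv]; exact α.act_mem hx) (by rwa [𝔾.inv_inv, α.act_inv_act hx])
  rwa [← 𝔾.mul_inv_rev hc, 𝔾.inv_inv] at hdom

lemma mul_eq_zero_of_r_ne
    (horth : ∀ e f, 𝔾.isId e → 𝔾.isId f → e ≠ f → ∀ x ∈ α.D e, ∀ y ∈ α.D f, x * y = 0)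
    {g h : G} {x y : R} (hx : x ∈ α.D g) (hy : y ∈ α.D h) (hr : 𝔾.r g ≠ 𝔾.r h) : x * y = 0 :=
  horth _ _ (𝔾.isId_r g) (𝔾.isId_r h) hr x (α.mem_D_r hx) y (α.mem_D_r hy)

section Unital

variable {one : G → R} (hone : ∀ g, IsIdentityElem (one g) (α.D g))
include hone

lemma one_mem (g : G) : one g ∈ α.D g := (hone g).1

lemma mul_one_of_mem {g : G} {x : R} (hx : x ∈ α.D g) : x * one g = x := ((hone g).2 x hx).2

lemma one_mul_of_mem {g : G} {x : R} (hx : x ∈ α.D g) : one g * x = x := ((hone g).2 x hx).1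

lemma mul_mem_left {g : G} (x : R) {y : R} (hy : y ∈ α.D g) : x * y ∈ α.D g := by
  have hxy := (α.ideal g).mul_mem_left
    ((α.ideal_r g).mul_mem_left (Set.mem_univ x) (α.mem_D_r (α.one_mem hone g))) hy
  rwa [mul_assoc, α.one_mul_of_mem hone hy] at hxy

lemma mul_mem_right {g : G} (x : R) {y : R} (hy : y ∈ α.D g) : y * x ∈ α.D g := by
  have hyx := (α.ideal g).mul_mem_right hy
    ((α.ideal_r g).mul_mem_right (α.mem_D_r (α.one_mem hone g)) (Set.mem_univ x))
  rwa [← mul_assoc, α.mul_one_of_mem hone hy] at hyx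

lemma mul_one_mem (g : G) (x : R) : x * one g ∈ α.D g := α.mul_mem_left hone x (α.one_mem hone g)

lemma one_mul_comm (g : G) (x : R) : one g * x = x * one g :=
  (hone g).mul_comm (α.mul_mem_right hone x (α.one_mem hone g)) (α.mul_one_mem hone g x)

lemma act_one (g : G) : α.act g (one (𝔾.inv g)) = one g := by
  have hw := α.act_inv_mem (α.one_mem hone g)
  calc α.act g (one (𝔾.inv g)) = α.act g (one (𝔾.inv g)) * one g :=
        (α.mul_one_of_mem hone (α.act_mem (α.one_mem hone _))).symm
    _ = α.act g (one (𝔾.inv g)) * α.act g (α.act (𝔾.inv g) (one g)) := by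
        rw [α.act_act_inv (α.one_mem hone g)]
    _ = α.act g (one (𝔾.inv g) * α.act (𝔾.inv g) (one g)) :=
        (α.map_mul g _ (α.one_mem hone _) _ hw).symm
    _ = one g := by rw [α.one_mul_of_mem hone hw, α.act_act_inv (α.one_mem hone g)]

lemma act_mul_one (g : G) (a b : R) :
    α.act g (a * b * one (𝔾.inv g)) =
      α.act g (a * one (𝔾.inv g)) * α.act g (b * one (𝔾.inv g)) := by
  rw [← α.map_mul g _ (α.mul_one_mem hone _ a) _ (α.mul_one_mem hone _ b), mul_assoc a (one _),
    α.one_mul_of_mem hone (α.mul_one_mem hone _ b), ← mul_assoc]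

lemma act_one_mul_one {h g : G} (hc : 𝔾.d h = 𝔾.r g) :
    α.act h (one g * one (𝔾.inv h)) = one (𝔾.mul h g) * one h := by
  have hx₁ := α.mul_mem_left hone (one g) (α.one_mem hone (𝔾.inv h))
  have hx₂ := α.mul_mem_right hone (one (𝔾.inv h)) (α.one_mem hone g)
  have hu₁ := α.act_mem hx₁
  have hu₂ := α.act_mem_mul hc hx₁ hx₂
  have hv₁ := α.mul_mem_left hone (one (𝔾.mul h g)) (α.one_mem hone h)
  have hv₂ := α.mul_mem_right hone (one h) (α.one_mem hone (𝔾.mul h g))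
  have hw₁ := α.act_inv_mem hv₁
  have hw₂ : α.act (𝔾.inv h) (one (𝔾.mul h g) * one h) ∈ α.D g := by
    have hw := α.act_mem_mul (h := 𝔾.inv h) (by rw [𝔾.d_inv, 𝔾.r_mul' h g hc])
      (by rwa [𝔾.inv_inv]) hv₂
    rwa [𝔾.inv_mul_cancel_left hc] at hw
  -- both sides are the identity element of `D h ∩ D (h g)`
  calc α.act h (one g * one (𝔾.inv h))
      = one (𝔾.mul h g) * one h * α.act h (one g * one (𝔾.inv h)) := by
        rw [mul_assoc, α.one_mul_of_mem hone hu₁, α.one_mul_of_mem hone hu₂]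
    _ = α.act h (α.act (𝔾.inv h) (one (𝔾.mul h g) * one h) * (one g * one (𝔾.inv h))) := by
        rw [α.map_mul h _ hw₁ _ hx₁, α.act_act_inv hv₁]
    _ = one (𝔾.mul h g) * one h := by
        rw [← mul_assoc, α.mul_one_of_mem hone hw₂, α.mul_one_of_mem hone hw₁,
          α.act_act_inv hv₁]

lemma act_act_mul_one {h g : G} (hc : 𝔾.d h = 𝔾.r g) (a : R) :
    α.act h (α.act g (a * one (𝔾.inv g)) * one (𝔾.inv h)) =
      α.act (𝔾.mul h g) (a * one (𝔾.inv (𝔾.mul h g))) * one h := by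
  have hs₁ := α.mul_mem_right hone (one (𝔾.inv h)) (α.one_mem hone g)
  have hs₂ := α.mul_mem_left hone (one g) (α.one_mem hone (𝔾.inv h))
  have hq := α.act_inv_mem hs₁
  have hq_act := α.act_act_inv hs₁
  have hq_act_mem : α.act g (α.act (𝔾.inv g) (one g * one (𝔾.inv h))) ∈ α.D (𝔾.inv h) := by
    rwa [hq_act]
  have hqm := α.dom_cond h g hc _ hq hq_act_mem
  have hw := α.mul_mem_left hone a hq
  have hga : α.act g (a * one (𝔾.inv g)) * one (𝔾.inv h) =
      α.act g (a * α.act (𝔾.inv g) (one g * one (𝔾.inv h))) := by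
    rw [← α.one_mul_of_mem hone hq, ← mul_assoc, α.map_mul g _ (α.mul_one_mem hone _ a) _ hq,
      hq_act, ← mul_assoc, α.mul_one_of_mem hone (α.act_mem (α.mul_one_mem hone _ a))]
  have hw_act : α.act g (a * α.act (𝔾.inv g) (one g * one (𝔾.inv h))) ∈ α.D (𝔾.inv h) := by
    rw [← hga]; exact α.mul_one_mem hone _ _
  rw [hga, α.comp_cond h g hc _ hw hw_act, ← α.one_mul_of_mem hone hqm, ← mul_assoc,
    α.map_mul _ _ (α.mul_one_mem hone _ a) _ hqm, ← α.comp_cond h g hc _ hq hq_act_mem, hq_act,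
    α.act_one_mul_one hone hc, ← mul_assoc,
    α.mul_one_of_mem hone (α.act_mem (α.mul_one_mem hone _ a))]

end Unital

end PartialGroupoidAction

namespace PartialGroupoidAction

variable {G : Type u} {𝔾 : AlgGroupoid G} {R : Type u} [Ring R]
  (α : PartialGroupoidAction 𝔾 R (Set.univ : Set R))

section Trace

variable [Fintype G] {one : G → R} (hone : ∀ g, IsIdentityElem (one g) (α.D g))
include hone

lemma sum_mul_traceMap_mul {ι : Type*} [Fintype ι] (xs ys : ι → R) (b : R) :
    ∑ i, xs i * traceMap 𝔾 α one (ys i * b) =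
      ∑ g, (∑ i, xs i * α.act g (ys i * one (𝔾.inv g))) * α.act g (b * one (𝔾.inv g)) := by
  simp only [traceMap, α.act_mul_one hone]
  simp only [Finset.mul_sum, Finset.sum_mul, mul_assoc]
  exact Finset.sum_comm

lemma traceMap_mem_invariants
    (horth : ∀ e f, 𝔾.isId e → 𝔾.isId f → e ≠ f → ∀ x ∈ α.D e, ∀ y ∈ α.D f, x * y = 0)
    (a : R) : traceMap 𝔾 α one a ∈ invariants 𝔾 α one := by
  classical
  intro h
  have ht : ∀ g, α.act g (a * one (𝔾.inv g)) ∈ α.D g := fun g => α.act_mem (α.mul_one_mem hone _ a)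
  calc α.act h (traceMap 𝔾 α one a * one (𝔾.inv h))
      = ∑ g, α.act h (α.act g (a * one (𝔾.inv g)) * one (𝔾.inv h)) := by
        rw [traceMap, Finset.sum_mul, α.act_sum fun g _ => α.mul_one_mem hone _ _]
    _ = ∑ g with 𝔾.r g = 𝔾.d h, α.act h (α.act g (a * one (𝔾.inv g)) * one (𝔾.inv h)) := by
        refine (Finset.sum_filter_of_ne fun g _ hg => ?_).symm
        by_contra hr
        rw [α.mul_eq_zero_of_r_ne horth (ht g) (α.one_mem hone _) (by rwa [𝔾.r_inv]),
          α.act_zero] at hg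
        exact hg rfl
    _ = ∑ g with 𝔾.r g = 𝔾.d h,
          α.act (𝔾.mul h g) (a * one (𝔾.inv (𝔾.mul h g))) * one h := by
        refine Finset.sum_congr rfl fun g hg => α.act_act_mul_one hone ?_ a
        exact ((Finset.mem_filter.1 hg).2).symm
    _ = ∑ g with 𝔾.r g = 𝔾.r h, α.act g (a * one (𝔾.inv g)) * one h :=
        𝔾.sum_comp_mul_left h fun g => α.act g (a * one (𝔾.inv g)) * one h
    _ = ∑ g, α.act g (a * one (𝔾.inv g)) * one h :=
        Finset.sum_filter_of_ne fun g _ hg => by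
          by_contra hr
          exact hg (α.mul_eq_zero_of_r_ne horth (ht g) (α.one_mem hone h) hr)
    _ = traceMap 𝔾 α one a * one h := (Finset.sum_mul _ _ _).symm

end Trace

variable [DecidableEq G]

def IsGaloisCoordinates (one : G → R) {ι : Type*} [Fintype ι] (X Y : ι → R) : Prop :=
  ∀ g : G, ∑ i, X i * α.act g (Y i * one (𝔾.inv g)) = if 𝔾.isId g then one g else 0

namespace IsGaloisCoordinates

variable {α} {one : G → R} (hone : ∀ g, IsIdentityElem (one g) (α.D g))
  (horth : ∀ e f, 𝔾.isId e → 𝔾.isId f → e ≠ f → ∀ x ∈ α.D e, ∀ y ∈ α.D f, x * y = 0)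
  {ι : Type*} [Fintype ι] {X Y : ι → R} (hXY : α.IsGaloisCoordinates one X Y)
include hone horth hXY

lemma sum_act_mul_act (g h : G) :
    ∑ i, α.act h (X i * one (𝔾.inv h)) * α.act g (Y i * one (𝔾.inv g)) =
      if g = h then one g else 0 := by
  by_cases hr : 𝔾.r h = 𝔾.r g
  swap
  · rw [if_neg fun hgh => hr (by rw [hgh])]
    exact Finset.sum_eq_zero fun i _ => α.mul_eq_zero_of_r_ne horth
      (α.act_mem (α.mul_one_mem hone _ _)) (α.act_mem (α.mul_one_mem hone _ _)) hr
  have hc : 𝔾.d (𝔾.inv h) = 𝔾.r g := by rw [𝔾.d_inv, hr]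
  -- `α_{h⁻¹}` carries `α_g(Y i 1_{g⁻¹}) 1_h` to `α_{h⁻¹g}(Y i 1_{(h⁻¹g)⁻¹}) 1_{h⁻¹}`
  have hterm : ∀ i, α.act h (X i * one (𝔾.inv h)) * α.act g (Y i * one (𝔾.inv g)) =
      α.act h (X i * α.act (𝔾.mul (𝔾.inv h) g) (Y i * one (𝔾.inv (𝔾.mul (𝔾.inv h) g))) *
        one (𝔾.inv h)) := by
    intro i
    have hB := α.mul_one_mem hone h (α.act g (Y i * one (𝔾.inv g)))
    have hD := α.act_act_mul_one hone hc (Y i)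
    rw [𝔾.inv_inv] at hD
    calc α.act h (X i * one (𝔾.inv h)) * α.act g (Y i * one (𝔾.inv g))
        = α.act h (X i * one (𝔾.inv h)) * (α.act g (Y i * one (𝔾.inv g)) * one h) := by
          rw [← α.one_mul_comm hone h (α.act g _), ← mul_assoc,
            α.mul_one_of_mem hone (α.act_mem (α.mul_one_mem hone _ _))]
      _ = α.act h (X i * one (𝔾.inv h)) *
            α.act h (α.act (𝔾.mul (𝔾.inv h) g) (Y i * one (𝔾.inv (𝔾.mul (𝔾.inv h) g))) *
              one (𝔾.inv h)) := by
          rw [← hD, α.act_act_inv hB]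
      _ = _ := by
          rw [← α.map_mul h _ (α.mul_one_mem hone _ _) _ (α.mul_one_mem hone _ _),
            mul_assoc (X i), α.one_mul_of_mem hone (α.mul_one_mem hone _ _), ← mul_assoc]
  rw [Finset.sum_congr rfl fun i _ => hterm i, ← α.act_sum fun i _ => α.mul_one_mem hone _ _,
    ← Finset.sum_mul, hXY]
  by_cases hgh : g = h
  · subst hgh
    have hone_inv : one (𝔾.inv g) ∈ α.D (𝔾.d g) := by
      rw [← 𝔾.r_inv]; exact α.mem_D_r (α.one_mem hone _)
    rw [𝔾.inv_mul, if_pos (𝔾.isId_d g), if_pos rfl, α.one_mul_of_mem hone hone_inv,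
      α.act_one hone]
  · rw [if_neg (𝔾.not_isId_inv_mul hr hgh), if_neg hgh, zero_mul, α.act_zero]

lemma mul_sum_act_mul {g : G} {a : R} (ha : a ∈ α.D g) :
    a * ∑ t, α.act g (X t * one (𝔾.inv g)) * Y t = if 𝔾.isId g then a else 0 := by
  have hdelta := hXY.sum_act_mul_act hone horth (𝔾.r g) g
  simp only [𝔾.inv_eq_self (𝔾.isId_r g),
    fun t => α.act_id _ (𝔾.isId_r g) _ (α.mul_one_mem hone _ (Y t)), ← mul_assoc,
    ← Finset.sum_mul] at hdelta
  have ha' : a * one (𝔾.r g) = a := α.mul_one_of_mem hone (α.mem_D_r ha)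
  rw [← ha', mul_assoc, α.one_mul_comm hone, hdelta]
  by_cases hg : 𝔾.isId g
  · rw [if_pos ((𝔾.r_eq_self_iff).2 hg), if_pos hg, ha']
  · rw [if_neg (mt (𝔾.r_eq_self_iff).1 hg), if_neg hg, mul_zero]

lemma sum_traceMap_mul_mul [Fintype G]
    (hunit : (1 : R) = ∑ e ∈ Finset.univ.filter (fun e => 𝔾.isId e), one e) (y : R) :
    ∑ t, traceMap 𝔾 α one (y * X t) * Y t = y :=
  calc ∑ t, traceMap 𝔾 α one (y * X t) * Y t
      = ∑ g, α.act g (y * one (𝔾.inv g)) * ∑ t, α.act g (X t * one (𝔾.inv g)) * Y t := by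
        simp only [traceMap, α.act_mul_one hone]
        simp only [Finset.sum_mul, Finset.mul_sum, mul_assoc]
        exact Finset.sum_comm
    _ = ∑ g, if 𝔾.isId g then y * one g else 0 := by
        refine Finset.sum_congr rfl fun g _ => ?_
        rw [hXY.mul_sum_act_mul hone horth (α.act_mem (α.mul_one_mem hone _ y))]
        split_ifs with hg
        · rw [𝔾.inv_eq_self hg, α.act_id g hg _ (α.mul_one_mem hone g y)]
        · rfl
    _ = y := by rw [← Finset.sum_filter, ← Finset.mul_sum, ← hunit, mul_one]

lemma sum_mul_act_mul_act [Fintype G] {f : G → R} (hf : ∀ g, f g ∈ α.D g) (g : G) :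
    ∑ p : G × ι, f p.1 * α.act p.1 (X p.2 * one (𝔾.inv p.1)) * α.act g (Y p.2 * one (𝔾.inv g)) =
      f g := by
  simp only [Fintype.sum_prod_type, mul_assoc, ← Finset.mul_sum, hXY.sum_act_mul_act hone horth,
    mul_ite, mul_zero, Finset.sum_ite_eq, Finset.mem_univ, if_true]
  exact α.mul_one_of_mem hone (hf g)

end IsGaloisCoordinates

end PartialGroupoidAction

open PartialGroupoidAction

/-- Bijectivity of `ρ` is stated as surjectivity onto `∏_g D_g` together with the equational
criterion for the vanishing of a tensor `∑ xs i ⊗ ys i` over `R^α`. -/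
theorem partial_galois_iff_rho_iso_general {G : Type u} [Fintype G]
    [DecidableEq G] (𝔾 : AlgGroupoid G) {R : Type u} [Ring R]
    (α : PartialGroupoidAction 𝔾 R (Set.univ : Set R))
    (one : G → R) (hone : ∀ g, IsIdentityElem (one g) (α.D g))
    (horth : ∀ e f, 𝔾.isId e → 𝔾.isId f → e ≠ f → ∀ x ∈ α.D e, ∀ y ∈ α.D f, x * y = 0)
    (hunit : (1 : R) = ∑ e ∈ Finset.univ.filter (fun e => 𝔾.isId e), one e) :
    IsPartialGalois 𝔾 α one ↔
      ((∀ f : G → R, (∀ g, f g ∈ α.D g) →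
          ∃ (k : ℕ) (xs ys : Fin k → R), ∀ g : G,
            f g = ∑ i, xs i * α.act g (ys i * one (𝔾.inv g))) ∧
       (∀ (k : ℕ) (xs ys : Fin k → R),
          (∀ g : G, ∑ i, xs i * α.act g (ys i * one (𝔾.inv g)) = 0) →
          ∃ (p : ℕ) (aij : Fin k → Fin p → R) (zs : Fin p → R),
            (∀ i j, aij i j ∈ invariants 𝔾 α one) ∧
            (∀ j, ∑ i, xs i * aij i j = 0) ∧
            (∀ i, ys i = ∑ j, aij i j * zs j))) := by
  constructor
  · rintro ⟨n, X, Y, hXY : α.IsGaloisCoordinates one X Y⟩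
    refine ⟨fun f hf => ?_, fun k xs ys hzero => ?_⟩
    · obtain ⟨k, xs, ys, hsum⟩ := exists_fin_sum_mul_eq
        (fun p : G × Fin n => f p.1 * α.act p.1 (X p.2 * one (𝔾.inv p.1))) (fun p => Y p.2)
      exact ⟨k, xs, ys, fun g =>
        ((hsum fun y => α.act g (y * one (𝔾.inv g))).trans
          (hXY.sum_mul_act_mul_act hone horth hf g)).symm⟩
    · refine ⟨n, fun i t => traceMap 𝔾 α one (ys i * X t), Y,
        fun i t => α.traceMap_mem_invariants hone horth _, fun t => ?_,
        fun i => (hXY.sum_traceMap_mul_mul hone horth hunit (ys i)).symm⟩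
      simp only [α.sum_mul_traceMap_mul hone, hzero, zero_mul, Finset.sum_const_zero]
  · rintro ⟨hsurj, -⟩
    obtain ⟨k, xs, ys, h⟩ := hsurj (fun g => if 𝔾.isId g then one g else 0) fun g => by
      split_ifs
      exacts [α.one_mem hone g, (α.ideal g).zero_mem]
    exact ⟨k, xs, ys, fun g => (h g).symm⟩

/-- **Theorem 5.3 (i) ⇔ (iv)**: under the standing hypotheses, `R` is an
`α`-partial Galois extension of `R^α` if and only if the map
`ρ : R ⊗_{R^α} R → ∏_{g ∈ G} D_g`, `x ⊗ y ↦ (x α_g(y 1_{g⁻¹}))_g`, is an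
isomorphism of left `R`-modules.  Bijectivity of `ρ` is expressed by:
surjectivity onto `∏_g D_g`, and injectivity via the standard equational
criterion for vanishing of tensors over `R^α`. -/
theorem partial_galois_iff_rho_iso {G : Type u} [Nonempty G] [Fintype G]
    [DecidableEq G] (𝔾 : AlgGroupoid G) {R : Type u} [Ring R]
    (α : PartialGroupoidAction 𝔾 R (Set.univ : Set R))
    (one : G → R) (hone : ∀ g, IsIdentityElem (one g) (α.D g))
    (hcentral : ∀ g (x : R), one g * x = x * one g)
    (horth : ∀ e f, 𝔾.isId e → 𝔾.isId f → e ≠ f → ∀ x ∈ α.D e, ∀ y ∈ α.D f, x * y = 0)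
    (hunit : (1 : R) = ∑ e ∈ Finset.univ.filter (fun e => 𝔾.isId e), one e) :
    IsPartialGalois 𝔾 α one ↔
      ((∀ f : G → R, (∀ g, f g ∈ α.D g) →
          ∃ (k : ℕ) (xs ys : Fin k → R), ∀ g : G,
            f g = ∑ i, xs i * α.act g (ys i * one (𝔾.inv g))) ∧
       (∀ (k : ℕ) (xs ys : Fin k → R),
          (∀ g : G, ∑ i, xs i * α.act g (ys i * one (𝔾.inv g)) = 0) →
          ∃ (p : ℕ) (aij : Fin k → Fin p → R) (zs : Fin p → R),
            (∀ i j, aij i j ∈ invariants 𝔾 α one) ∧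
            (∀ j, ∑ i, xs i * aij i j = 0) ∧
            (∀ i, ys i = ∑ j, aij i j * zs j))) :=
  partial_galois_iff_rho_iso_general 𝔾 α one hone horth hunit
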